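/- arXiv:1411.0519 — 3 statements merged into one kernel-verified Lean document; each statement's English description precedes it below -/
import Mathlib

section
/- Let α : [0,π] → ℝ satisfy α(0) = 1 and |α(θ)| ≤ 1 for all θ ∈ [0,π], and define Ŝ(ω, α, θ_t)² := (1-ω)² + 2ω(1-ω)α cos θ_t + α²ω². If additionally α(θ) ≥ 0 for all θ, then inf_{ω ∈ (0,1]} sup_{θ_t ∈ [π/2,π], θ_x ∈ [0,π]} Ŝ(ω, α(θ_x), θ_t) = 1/√2, attained at ω* = 1/2, θ_t* = π/2, θ_x* = 0. -/
open Real Set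

/-- Min-max principle: for α with α(0)=1, |α|≤1 and α ≥ 0 on [0,π],
inf_{ω∈(0,1]} sup_{θ_t∈[π/2,π], θ_x∈[0,π]} Ŝ(ω, α(θ_x), θ_t) = 1/√2,
attained at ω* = 1/2, θ_t* = π/2, θ_x* = 0. -/
theorem stmt8 (α : ℝ → ℝ)
    (h0 : α 0 = 1)
    (hb : ∀ θ ∈ Set.Icc (0 : ℝ) Real.pi, |α θ| ≤ 1)
    (hpos : ∀ θ ∈ Set.Icc (0 : ℝ) Real.pi, 0 ≤ α θ)
    (S : ℝ → ℝ → ℝ → ℝ)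
    (hS : ∀ ω a θ, S ω a θ =
      Real.sqrt ((1 - ω) ^ 2 + 2 * ω * (1 - ω) * a * Real.cos θ + a ^ 2 * ω ^ 2)) :
    (∀ ω ∈ Set.Ioc (0 : ℝ) 1, ∃ θt ∈ Set.Icc (Real.pi / 2) Real.pi,
      ∃ θx ∈ Set.Icc (0 : ℝ) Real.pi, 1 / Real.sqrt 2 ≤ S ω (α θx) θt) ∧
    (∀ θt ∈ Set.Icc (Real.pi / 2) Real.pi, ∀ θx ∈ Set.Icc (0 : ℝ) Real.pi,
      S (1 / 2) (α θx) θt ≤ 1 / Real.sqrt 2) ∧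
    S (1 / 2) (α 0) (Real.pi / 2) = 1 / Real.sqrt 2 := by
  have hpi : (0 : ℝ) ≤ Real.pi := Real.pi_pos.le
  have hhalf : (1 : ℝ) / Real.sqrt 2 = Real.sqrt (1 / 2) := by
    rw [one_div, one_div, Real.sqrt_inv]
  refine ⟨?_, ?_, ?_⟩
  · intro ω hω
    refine ⟨Real.pi / 2, ⟨le_refl _, by linarith⟩, 0, ⟨le_refl _, hpi⟩, ?_⟩
    rw [hS, h0, Real.cos_pi_div_two, hhalf]
    apply Real.sqrt_le_sqrt
    nlinarith [sq_nonneg (2 * ω - 1)]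
  · intro θt hθt θx hθx
    rw [hS, hhalf]
    apply Real.sqrt_le_sqrt
    have ha0 := hpos θx hθx
    have ha1 : α θx ≤ 1 := (abs_le.mp (hb θx hθx)).2
    have hc : Real.cos θt ≤ 0 := by
      rcases hθt with ⟨h1, h2⟩
      exact Real.cos_nonpos_of_pi_div_two_le_of_le h1 (by linarith)
    nlinarith [mul_nonneg ha0 (neg_nonneg.mpr hc)]
  · rw [hS, h0, Real.cos_pi_div_two, hhalf]
    norm_num
end

section
/- For the (1,2) subdiagonal Padé approximation R₁(z) = (1 + z/3)/(1 - 2z/3 + z²/6) of e^z: R₁(z) ≥ (5 - 3√3)/2 for all z ≤ 0, with |R₁(z)| ≤ 1 on (-∞,0], R₁(0) = 1, and R₁(z) → 0 as z → -∞. -/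
open Real Set Filter

/-- Properties of the (1,2) subdiagonal Padé approximation
R₁(z) = (1 + z/3)/(1 - 2z/3 + z²/6): R₁(z) ≥ (5-3√3)/2 and |R₁(z)| ≤ 1 on
(-∞,0], R₁(0) = 1, and R₁(z) → 0 as z → -∞. -/
theorem stmt18 (R₁ : ℝ → ℝ)
    (hR₁ : ∀ z, R₁ z = (1 + z / 3) / (1 - 2 * z / 3 + z ^ 2 / 6)) :
    (∀ z ≤ (0 : ℝ), (5 - 3 * Real.sqrt 3) / 2 ≤ R₁ z) ∧
    (∀ z ≤ (0 : ℝ), |R₁ z| ≤ 1) ∧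
    R₁ 0 = 1 ∧
    Filter.Tendsto R₁ Filter.atBot (nhds 0) := by
  have hs : Real.sqrt 3 ^ 2 = 3 := Real.sq_sqrt (by norm_num)
  have hs1 : (1:ℝ) ≤ Real.sqrt 3 := by nlinarith [Real.sqrt_nonneg 3]
  have hD : ∀ z : ℝ, 0 < 1 - 2 * z / 3 + z ^ 2 / 6 := fun z => by nlinarith [sq_nonneg (z - 2)]
  refine ⟨?_, ?_, ?_, ?_⟩
  · intro z hz
    rw [hR₁, le_div_iff₀ (hD z)]
    nlinarith [sq_nonneg (z + 3 + 3 * Real.sqrt 3), Real.sqrt_nonneg 3]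
  · intro z hz
    rw [hR₁, abs_le]
    constructor
    · rw [le_div_iff₀ (hD z)]
      nlinarith [sq_nonneg (z - 1)]
    · rw [div_le_one (hD z)]
      nlinarith
  · rw [hR₁]; norm_num
  · have h1 : Tendsto (fun z : ℝ => z⁻¹) atBot (nhds 0) := by
      have := (tendsto_inv_atTop_zero.comp (tendsto_neg_atBot_atTop : Tendsto (fun z : ℝ => -z) atBot atTop)).neg
      simpa [Function.comp, inv_neg] using this
    have hnum : Tendsto (fun z : ℝ => 6 * z⁻¹ * z⁻¹ + 2 * z⁻¹) atBot (nhds 0) := by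
      have := ((h1.const_mul 6).mul h1).add (h1.const_mul 2)
      simpa using this
    have hden : Tendsto (fun z : ℝ => 6 * z⁻¹ * z⁻¹ - 4 * z⁻¹ + 1) atBot (nhds 1) := by
      have := (((h1.const_mul 6).mul h1).sub (h1.const_mul 4)).add_const 1
      simpa using this
    have hlim := hnum.div hden one_ne_zero
    rw [zero_div] at hlim
    apply hlim.congr'
    filter_upwards [eventually_lt_atBot (0:ℝ)] with z hz
    rw [hR₁]
    have hz0 : z ≠ 0 := ne_of_lt hz
    have hD' : (1 - 2 * z / 3 + z ^ 2 / 6) ≠ 0 := (hD z).ne'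
    have hden' : 6 * z⁻¹ * z⁻¹ - 4 * z⁻¹ + 1 ≠ 0 := by
      nlinarith [sq_nonneg (3 * z⁻¹ - 1)]
    simp only [Pi.div_apply]
    rw [div_eq_div_iff hden' hD']
    field_simp
    ring
end

section
/- For the model smoothing symbol with ω = 1/2 and 0 ≤ α ≤ 1: max( |1 - ω|, sup_{θ∈[π/2,π]} sqrt((1-ω)² + 2ω(1-ω)α cos θ + α²ω²) ) ≤ 1/√2, i.e. the full spectral radius of the damped block Jacobi symbol over high temporal frequencies, including the eigenvalue 1-ω, is at most 1/√2. -/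
open Real Set

/-- With ω = 1/2 and 0 ≤ α ≤ 1, the full spectral radius of the damped block
Jacobi symbol over high temporal frequencies θ ∈ [π/2,π], namely
max(|1-ω|, Ŝ(ω,α,θ)), is at most 1/√2. -/
theorem stmt19 (α : ℝ) (hα0 : 0 ≤ α) (hα1 : α ≤ 1) :
    ∀ θ ∈ Set.Icc (Real.pi / 2) Real.pi,
      max (|1 - (1 / 2 : ℝ)|)
        (Real.sqrt ((1 - (1 / 2 : ℝ)) ^ 2
            + 2 * (1 / 2) * (1 - (1 / 2 : ℝ)) * α * Real.cos θ
            + α ^ 2 * (1 / 2 : ℝ) ^ 2))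
        ≤ 1 / Real.sqrt 2 := by
  intro θ hθ
  have h2 : (1 : ℝ) / Real.sqrt 2 = Real.sqrt (1 / 2) := by
    rw [one_div, one_div, Real.sqrt_inv]

  rw [h2]
  have hcos : Real.cos θ ≤ 0 :=
    Real.cos_nonpos_of_pi_div_two_le_of_le hθ.1 (hθ.2.trans (by linarith [Real.pi_pos]))
  apply max_le
  · rw [abs_of_nonneg (by norm_num : (0:ℝ) ≤ 1 - 1/2)]
    rw [show (1:ℝ) - 1/2 = Real.sqrt ((1/2)^2) by rw [Real.sqrt_sq] <;> norm_num]
    apply Real.sqrt_le_sqrt; norm_num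
  · apply Real.sqrt_le_sqrt
    nlinarith [sq_nonneg α, mul_nonpos_of_nonneg_of_nonpos hα0 hcos]
end
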